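/- Let B = [[a, c],[b, d]] over ℤ[i] with Δ = det B = ad − bc ≠ 0 and γ = gcd(a,c). Let Q = [0,1) + i[0,1) ⊆ ℂ. Then the set D = {(δ₁, δ₂) ∈ ℤ[i]² : δ₁ ∈ γQ ∩ ℤ[i], δ₂ ∈ (Δ/γ)Q ∩ ℤ[i]} is a complete set of coset representatives for the quotient ℤ[i]² / B ℤ[i]², i.e., every element of ℤ[i]² is congruent modulo the subgroup B ℤ[i]² to exactly one element of D. -/

import Mathlib

local notation "ℤ[i]" => GaussianInt
open Complex

/-!
Right multiplication by the unimodular matrix `[[p, -c'], [s, a']]` built from a Bézout relation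
`a' p + c' s = 1` for `a = γ a'`, `c = γ c'` turns `B` into the lower triangular matrix
`[[γ, 0], [e, Δ/γ]]` without changing its column lattice. For a triangular lattice the
representatives are found one coordinate at a time, and in `ℤ[i]` the residues modulo `g ≠ 0` are
represented exactly once in `g Q`: reduce `x / g` to `Q` by taking floors of both coordinates, and
two points of `Q` differ by a Gaussian integer only if they are equal.
-/

section Triangular

variable {R : Type*} [CommRing R]

def colSpan (a b c d : R) : Set (R × R) :=
  {w | ∃ v : R × R, w = (a * v.1 + c * v.2, b * v.1 + d * v.2)}

theorem colSpan_eq_of_bezout {a b c d γ a' c' p s : R} (ha : a = γ * a') (hc : c = γ * c')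
    (hps : a' * p + c' * s = 1) :
    colSpan a b c d = colSpan γ (b * p + d * s) 0 (a' * d - c' * b) := by
  ext w
  constructor
  · rintro ⟨v, rfl⟩
    refine ⟨(a' * v.1 + c' * v.2, -s * v.1 + p * v.2), Prod.ext ?_ ?_⟩
    · simp only [ha, hc]; ring
    · linear_combination (-b * v.1 - d * v.2) * hps
  · rintro ⟨u, rfl⟩
    refine ⟨(p * u.1 - c' * u.2, s * u.1 + a' * u.2), Prod.ext ?_ ?_⟩
    · simp only [ha, hc]; linear_combination (-γ * u.1) * hps
    · ring

theorem mem_colSpan_lowerTriangular_iff {g e h x y : R} :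
    (x, y) ∈ colSpan g e 0 h ↔ ∃ m n, x = g * m ∧ y = e * m + h * n := by
  simp [colSpan]

theorem existsUnique_mem_colSpan_lowerTriangular [IsDomain R] {g e h : R} (hg : g ≠ 0)
    {A B : Set R} (hA : ∀ x, ∃! r, r ∈ A ∧ g ∣ x - r) (hB : ∀ y, ∃! r, r ∈ B ∧ h ∣ y - r)
    (w : R × R) :
    ∃! δ : R × R, (δ.1 ∈ A ∧ δ.2 ∈ B) ∧ (w.1 - δ.1, w.2 - δ.2) ∈ colSpan g e 0 h := by
  obtain ⟨r₁, ⟨hr₁A, m, hm⟩, hr₁_unique⟩ := hA w.1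
  obtain ⟨r₂, ⟨hr₂B, n, hn⟩, hr₂_unique⟩ := hB (w.2 - e * m)
  refine ⟨(r₁, r₂), ⟨⟨hr₁A, hr₂B⟩, mem_colSpan_lowerTriangular_iff.2 ⟨m, n, hm, ?_⟩⟩, ?_⟩
  · linear_combination hn
  rintro δ ⟨⟨hδA, hδB⟩, hδ⟩
  obtain ⟨m', n', hm', hn'⟩ := mem_colSpan_lowerTriangular_iff.1 hδ
  have h₁ : δ.1 = r₁ := hr₁_unique _ ⟨hδA, m', hm'⟩
  have hmm' : m' = m := mul_left_cancel₀ hg (by rw [← hm', ← hm, h₁])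
  have h₂ : δ.2 = r₂ := hr₂_unique _ ⟨hδB, n', by rw [← hmm']; linear_combination hn'⟩
  exact Prod.ext h₁ h₂

end Triangular

theorem EuclideanDomain.exists_gcd_mul_bezout {R : Type*} [EuclideanDomain R] [DecidableEq R]
    {a c : R} (h : gcd a c ≠ 0) :
    ∃ a' c' p s : R, a = gcd a c * a' ∧ c = gcd a c * c' ∧ a' * p + c' * s = 1 := by
  obtain ⟨a', ha⟩ := EuclideanDomain.gcd_dvd_left a c
  obtain ⟨c', hc⟩ := EuclideanDomain.gcd_dvd_right a c
  refine ⟨a', c', gcdA a c, gcdB a c, ha, hc, mul_left_cancel₀ h ?_⟩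
  calc gcd a c * (a' * gcdA a c + c' * gcdB a c)
      = (gcd a c * a') * gcdA a c + (gcd a c * c') * gcdB a c := by ring
    _ = gcd a c * 1 := by rw [← ha, ← hc, mul_one, gcd_eq_gcd_ab]

namespace GaussianInt

def unitSquare : Set ℂ := {z | 0 ≤ z.re ∧ z.re < 1 ∧ 0 ≤ z.im ∧ z.im < 1}

def squareReps (g : ℤ[i]) : Set ℤ[i] := {r | ∃ q ∈ unitSquare, (r : ℂ) = (g : ℂ) * q}

theorem sub_floor_mem_unitSquare (t : ℂ) :
    t - ((⟨⌊t.re⌋, ⌊t.im⌋⟩ : ℤ[i]) : ℂ) ∈ unitSquare := by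
  simp only [unitSquare, Set.mem_ofPred_eq, sub_re, sub_im, re_toComplex, im_toComplex,
    sub_nonneg, sub_lt_iff_lt_add']
  exact ⟨Int.floor_le _, Int.lt_floor_add_one _, Int.floor_le _, Int.lt_floor_add_one _⟩

theorem eq_zero_of_toComplex_eq_sub {q q' : ℂ} (hq : q ∈ unitSquare) (hq' : q' ∈ unitSquare)
    {n : ℤ[i]} (hn : (n : ℂ) = q - q') : n = 0 := by
  obtain ⟨hq₁, hq₂, hq₃, hq₄⟩ := hq
  obtain ⟨hq'₁, hq'₂, hq'₃, hq'₄⟩ := hq'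
  have hre : ((n.re : ℤ) : ℝ) = q.re - q'.re := by rw [← re_toComplex, hn, sub_re]
  have him : ((n.im : ℤ) : ℝ) = q.im - q'.im := by rw [← im_toComplex, hn, sub_im]
  have hre₁ : (-1 : ℤ) < n.re := by exact_mod_cast (by linarith : (-1 : ℝ) < n.re)
  have hre₂ : n.re < 1 := by exact_mod_cast (by linarith : (n.re : ℝ) < 1)
  have him₁ : (-1 : ℤ) < n.im := by exact_mod_cast (by linarith : (-1 : ℝ) < n.im)
  have him₂ : n.im < 1 := by exact_mod_cast (by linarith : (n.im : ℝ) < 1)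
  exact Zsqrtd.ext (by change n.re = 0; omega) (by change n.im = 0; omega)

theorem existsUnique_mem_squareReps_dvd_sub {g : ℤ[i]} (hg : g ≠ 0) (x : ℤ[i]) :
    ∃! r, r ∈ squareReps g ∧ g ∣ x - r := by
  have hgC : (g : ℂ) ≠ 0 := by rwa [Ne, toComplex_eq_zero]
  set t : ℂ := x / g
  set k : ℤ[i] := ⟨⌊t.re⌋, ⌊t.im⌋⟩
  have hxk : ((x - g * k : ℤ[i]) : ℂ) = g * (t - k) := by
    rw [toComplex_sub, toComplex_mul, mul_sub, mul_div_cancel₀ _ hgC]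
  refine ⟨x - g * k, ⟨⟨t - k, sub_floor_mem_unitSquare t, hxk⟩, k, by ring⟩, ?_⟩
  rintro r ⟨⟨q, hq, hrq⟩, m, hm⟩
  obtain ⟨n, hn⟩ : g ∣ r - (x - g * k) := ⟨k - m, by linear_combination -hm⟩
  have hnC : (n : ℂ) = q - (t - k) := by
    apply mul_left_cancel₀ hgC
    rw [← toComplex_mul, ← hn, toComplex_sub, hrq, hxk]
    ring
  rw [eq_zero_of_toComplex_eq_sub hq (sub_floor_mem_unitSquare t) hnC, mul_zero] at hn
  exact sub_eq_zero.mp hn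

end GaussianInt

/-- For `B = [[a,c],[b,d]]` over `ℤ[i]` with `Δ = det B ≠ 0` and
`γ = gcd a c`, the set `D = (γQ ∩ ℤ[i]) × ((Δ/γ)Q ∩ ℤ[i])` (with `Q` the half-open
unit square) is a complete set of coset representatives of `ℤ[i]² / B ℤ[i]²`:
every `w ∈ ℤ[i]²` is congruent modulo `B ℤ[i]²` to exactly one element of `D`. -/
theorem coset_representatives (a b c d : ℤ[i]) (hΔ : a * d - b * c ≠ 0) :
    let Δ : ℤ[i] := a * d - b * c
    let γ : ℤ[i] := EuclideanDomain.gcd a c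
    let Q : Set ℂ := {z | 0 ≤ z.re ∧ z.re < 1 ∧ 0 ≤ z.im ∧ z.im < 1}
    let D : Set (ℤ[i] × ℤ[i]) :=
      {δ | (∃ q ∈ Q, (δ.1 : ℂ) = (γ : ℂ) * q) ∧ (∃ q ∈ Q, (δ.2 : ℂ) = ((Δ / γ : ℤ[i]) : ℂ) * q)}
    let S : Set (ℤ[i] × ℤ[i]) :=
      {w | ∃ v : ℤ[i] × ℤ[i], w = (a * v.1 + c * v.2, b * v.1 + d * v.2)}
    ∀ w : ℤ[i] × ℤ[i], ∃! δ : ℤ[i] × ℤ[i], δ ∈ D ∧ (w.1 - δ.1, w.2 - δ.2) ∈ S := by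
  intro Δ γ Q D S w
  have hγ : γ ≠ 0 := by
    intro h
    obtain ⟨ha, hc⟩ := EuclideanDomain.gcd_eq_zero_iff.mp h
    exact hΔ (by rw [ha, hc]; ring)
  obtain ⟨a', c', p, s, ha, hc, hps⟩ := EuclideanDomain.exists_gcd_mul_bezout (a := a) (c := c) hγ
  change a = γ * a' at ha
  change c = γ * c' at hc
  have hΔγ : Δ = γ * (a' * d - c' * b) := by linear_combination d * ha - b * hc
  have hg₂ : a' * d - c' * b ≠ 0 := by
    intro h
    exact hΔ (by rw [← mul_zero γ, ← h, ← hΔγ])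
  have hdiv : Δ / γ = a' * d - c' * b := by rw [hΔγ, mul_div_cancel_left₀ _ hγ]
  change ∃! δ : ℤ[i] × ℤ[i],
    (δ.1 ∈ GaussianInt.squareReps γ ∧ δ.2 ∈ GaussianInt.squareReps (Δ / γ)) ∧
      (w.1 - δ.1, w.2 - δ.2) ∈ colSpan a b c d
  rw [hdiv, colSpan_eq_of_bezout ha hc hps]
  exact existsUnique_mem_colSpan_lowerTriangular hγ
    (GaussianInt.existsUnique_mem_squareReps_dvd_sub hγ)
    (GaussianInt.existsUnique_mem_squareReps_dvd_sub hg₂) w
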